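/- Let μ > −1/2, r(x)=x^{−μ−1/2}, s(x)=x^{2μ+1}/c_μ, and let D_μ be the Hankel convolution kernel. If f ∈ L¹(sr) and g ∈ L^∞(r), then for every x ∈ (0,∞) the double integral (f♯g)(x) = ∫₀^∞∫₀^∞ D_μ(x,y,z) f(y) g(z) dy dz converges absolutely, f♯g ∈ L^∞(r), and ‖f♯g‖_{L^∞(r)} ≤ ‖f‖_{L¹(sr)} ‖g‖_{L^∞(r)}. -/

import Mathlib

open MeasureTheory Set Real

/-- Area of the triangle with sides `x, y, z`. -/
noncomputable def triA (x y z : ℝ) : ℝ :=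
  (1/4) * Real.sqrt (((x + y) ^ 2 - z ^ 2) * (z ^ 2 - (x - y) ^ 2))

/-- The Delsarte–Hankel translation kernel `D_μ`. -/
noncomputable def Dker (μ x y z : ℝ) : ℝ :=
  if |x - y| < z ∧ z < x + y then
    (2 ^ (μ - 1) * (x * y * z) ^ (-μ + 1/2) / (Real.Gamma (μ + 1/2) * Real.sqrt Real.pi)) *
      triA x y z ^ (2 * μ - 1)
  else 0

/-!
The kernel `D_μ(x, y, ·)` is supported on `(|x - y|, x + y)`. Substituting
`z² = (x - y)² + 4xy t` turns the triangle area into `xy √(t (1 - t))`, so the moment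
`∫ z^(μ+1/2) D_μ(x, y, z) dz` becomes the Beta integral `B(μ + 1/2, μ + 1/2)`, which Legendre's
duplication formula evaluates to `(xy)^(μ+1/2) / c_μ`. Since `D_μ ≥ 0` and
`|g z| ≤ M z^(μ+1/2)`, Tonelli bounds `∫∫ D_μ(x, y, z) |f y| |g z|` by `M x^(μ+1/2) ∫ |f| s r`,
which gives absolute convergence, and multiplying by `r x = x^(-μ-1/2)` gives the estimate.
-/

theorem Real.integral_Ioo_rpow_mul_one_sub_rpow {a b : ℝ} (ha : 0 < a) (hb : 0 < b) :
    ∫ t in Ioo (0 : ℝ) 1, t ^ (a - 1) * (1 - t) ^ (b - 1) =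
      Gamma a * Gamma b / Gamma (a + b) := by
  have hbeta := Complex.Gamma_mul_Gamma_eq_betaIntegral (s := a) (t := b)
    (by simpa using ha) (by simpa using hb)
  have hcast : Complex.betaIntegral a b =
      ((∫ t in Ioo (0 : ℝ) 1, t ^ (a - 1) * (1 - t) ^ (b - 1) : ℝ) : ℂ) := by
    rw [Complex.betaIntegral, intervalIntegral.integral_of_le zero_le_one,
      integral_Ioc_eq_integral_Ioo, ← integral_complex_ofReal]
    refine setIntegral_congr_fun measurableSet_Ioo fun t ht => ?_
    rw [Complex.ofReal_mul, Complex.ofReal_cpow ht.1.le,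
      Complex.ofReal_cpow (sub_pos.2 ht.2).le]
    push_cast
    rfl
  rw [hcast, ← Complex.ofReal_add, Complex.Gamma_ofReal, Complex.Gamma_ofReal,
    Complex.Gamma_ofReal, ← Complex.ofReal_mul, ← Complex.ofReal_mul, Complex.ofReal_inj] at hbeta
  rw [hbeta, mul_div_cancel_left₀ _ (Gamma_pos_of_pos (add_pos ha hb)).ne']

theorem Real.Gamma_add_half_mul_Gamma_add_one (s : ℝ) :
    (2 ^ s) ^ 2 * (Gamma (s + 1 / 2) * Gamma (s + 1)) = Gamma (2 * s + 1) * √π := by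
  have h := Gamma_mul_Gamma_add_half (s + 1 / 2)
  rw [show s + 1 / 2 + 1 / 2 = s + 1 by ring, show 2 * (s + 1 / 2) = 2 * s + 1 by ring,
    show 1 - (2 * s + 1) = -s + -s by ring, rpow_add two_pos, rpow_neg zero_le_two] at h
  rw [h]
  field_simp

theorem le_mul_rpow_of_rpow_neg_mul_le {z a c M : ℝ} (hz : 0 < z) (h : z ^ (-a) * c ≤ M) :
    c ≤ M * z ^ a := by
  rw [rpow_neg hz.le, inv_mul_le_iff₀ (rpow_pos_of_pos hz a)] at h
  linarith

section ChangeOfVariables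

variable {E : Type*} [NormedAddCommGroup E] [NormedSpace ℝ E]

theorem integral_Ioo_eq_smul_integral_Ioo_zero_one (g : ℝ → E) {a b : ℝ} (hab : a < b) :
    ∫ u in Ioo a b, g u = (b - a) • ∫ t in Ioo (0 : ℝ) 1, g ((b - a) * t + a) := by
  have hba : 0 < b - a := sub_pos.2 hab
  rw [← integral_Ioc_eq_integral_Ioo, ← integral_Ioc_eq_integral_Ioo,
    ← intervalIntegral.integral_of_le hab.le, ← intervalIntegral.integral_of_le zero_le_one,
    intervalIntegral.integral_comp_mul_add _ hba.ne', smul_smul, mul_inv_cancel₀ hba.ne',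
    one_smul]
  congr 1 <;> ring

theorem integral_Ioo_two_mul_smul_comp_sq (g : ℝ → E) {c d : ℝ} (hc : 0 ≤ c) (hcd : c ≤ d) :
    ∫ z in Ioo c d, (2 * z) • g (z ^ 2) = ∫ u in Ioo (c ^ 2) (d ^ 2), g u := by
  have hmono : StrictMonoOn (· ^ 2 : ℝ → ℝ) (Icc c d) :=
    (pow_left_strictMonoOn₀ two_ne_zero).mono fun z hz => hc.trans hz.1
  have himage : (· ^ 2 : ℝ → ℝ) '' Ioo c d = Ioo (c ^ 2) (d ^ 2) :=
    (continuous_pow 2).continuousOn.image_Ioo_of_strictMonoOn hcd hmono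
  rw [← himage, integral_image_eq_integral_abs_deriv_smul measurableSet_Ioo
    (f' := fun z => 2 * z) (fun z _ => by simpa using (hasDerivAt_pow 2 z).hasDerivWithinAt)
    (hmono.injOn.mono Ioo_subset_Icc_self)]
  refine setIntegral_congr_fun measurableSet_Ioo fun z hz => ?_
  have hz0 : 0 < z := hc.trans_lt hz.1
  rw [abs_of_pos (by positivity)]

end ChangeOfVariables

section KernelBound

variable {α β : Type*} [MeasurableSpace β] {ν : Measure β} {K : α → β → ℝ} {w : β → ℝ}
  {f : α → ℂ} {g : β → ℂ} {M : ℝ}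

theorem norm_kernel_mul_mul_le (hK0 : ∀ y z, 0 ≤ K y z) (hgw : ∀ᵐ z ∂ν, ‖g z‖ ≤ M * w z)
    (y : α) :
    ∀ᵐ z ∂ν, ‖(K y z : ℂ) * f y * g z‖ ≤ M * ‖f y‖ * (w z * K y z) := by
  filter_upwards [hgw] with z hz
  rw [norm_mul, norm_mul, Complex.norm_real, Real.norm_of_nonneg (hK0 y z)]
  calc K y z * ‖f y‖ * ‖g z‖ ≤ K y z * ‖f y‖ * (M * w z) :=
        mul_le_mul_of_nonneg_left hz (mul_nonneg (hK0 y z) (norm_nonneg _))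
    _ = M * ‖f y‖ * (w z * K y z) := by ring

variable [MeasurableSpace α] {μ : Measure α} {m : α → ℝ}

theorem integral_norm_kernel_mul_mul_le (hK0 : ∀ y z, 0 ≤ K y z)
    (hKw : ∀ᵐ y ∂μ, Integrable (fun z => w z * K y z) ν)
    (hm : ∀ᵐ y ∂μ, ∫ z, w z * K y z ∂ν = m y) (hgw : ∀ᵐ z ∂ν, ‖g z‖ ≤ M * w z) :
    ∀ᵐ y ∂μ, ∫ z, ‖(K y z : ℂ) * f y * g z‖ ∂ν ≤ M * (‖f y‖ * m y) := by
  filter_upwards [hKw, hm] with y hy hmy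
  calc ∫ z, ‖(K y z : ℂ) * f y * g z‖ ∂ν ≤ ∫ z, M * ‖f y‖ * (w z * K y z) ∂ν :=
        integral_mono_of_nonneg (.of_forall fun _ => norm_nonneg _) (hy.const_mul _)
          (norm_kernel_mul_mul_le hK0 hgw y)
    _ = M * (‖f y‖ * m y) := by rw [integral_const_mul, hmy, mul_assoc]

variable [SFinite ν]

theorem integrable_kernel_mul_mul (hK : AEStronglyMeasurable (Function.uncurry K) (μ.prod ν))
    (hK0 : ∀ y z, 0 ≤ K y z) (hKw : ∀ᵐ y ∂μ, Integrable (fun z => w z * K y z) ν)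
    (hm : ∀ᵐ y ∂μ, ∫ z, w z * K y z ∂ν = m y)
    (hf : AEStronglyMeasurable f μ) (hg : AEStronglyMeasurable g ν)
    (hfm : Integrable (fun y => ‖f y‖ * m y) μ) (hgw : ∀ᵐ z ∂ν, ‖g z‖ ≤ M * w z) :
    Integrable (fun p : α × β => (K p.1 p.2 : ℂ) * f p.1 * g p.2) (μ.prod ν) := by
  have hmeas : AEStronglyMeasurable (fun p : α × β => (K p.1 p.2 : ℂ) * f p.1 * g p.2)
      (μ.prod ν) :=
    ((Complex.continuous_ofReal.comp_aestronglyMeasurable hK).mul hf.comp_fst).mul hg.comp_snd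
  refine (integrable_prod_iff hmeas).2 ⟨?_, ?_⟩
  · filter_upwards [hKw, hmeas.prodMk_left] with y hy hy'
    exact (hy.const_mul (M * ‖f y‖)).mono' hy' (norm_kernel_mul_mul_le hK0 hgw y)
  · refine (hfm.const_mul M).mono' hmeas.norm.integral_prod_right' ?_
    filter_upwards [integral_norm_kernel_mul_mul_le hK0 hKw hm hgw] with y hy
    rwa [Real.norm_of_nonneg (integral_nonneg fun _ => norm_nonneg _)]

theorem norm_integral_kernel_mul_mul_le [SFinite μ]
    (hK : AEStronglyMeasurable (Function.uncurry K) (μ.prod ν))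
    (hK0 : ∀ y z, 0 ≤ K y z) (hKw : ∀ᵐ y ∂μ, Integrable (fun z => w z * K y z) ν)
    (hm : ∀ᵐ y ∂μ, ∫ z, w z * K y z ∂ν = m y)
    (hf : AEStronglyMeasurable f μ) (hg : AEStronglyMeasurable g ν)
    (hfm : Integrable (fun y => ‖f y‖ * m y) μ) (hgw : ∀ᵐ z ∂ν, ‖g z‖ ≤ M * w z) :
    ‖∫ p, (K p.1 p.2 : ℂ) * f p.1 * g p.2 ∂(μ.prod ν)‖ ≤ M * ∫ y, ‖f y‖ * m y ∂μ := by
  have hint := integrable_kernel_mul_mul hK hK0 hKw hm hf hg hfm hgw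
  calc ‖∫ p, (K p.1 p.2 : ℂ) * f p.1 * g p.2 ∂(μ.prod ν)‖
      ≤ ∫ p, ‖(K p.1 p.2 : ℂ) * f p.1 * g p.2‖ ∂(μ.prod ν) := norm_integral_le_integral_norm _
    _ = ∫ y, ∫ z, ‖(K y z : ℂ) * f y * g z‖ ∂ν ∂μ := integral_prod _ hint.norm
    _ ≤ ∫ y, M * (‖f y‖ * m y) ∂μ :=
        integral_mono_ae hint.norm.integral_prod_left (hfm.const_mul M)
          (integral_norm_kernel_mul_mul_le hK0 hKw hm hgw)
    _ = M * ∫ y, ‖f y‖ * m y ∂μ := integral_const_mul _ _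

end KernelBound

noncomputable def heronArea (x y u : ℝ) : ℝ :=
  (1 / 4) * √(((x + y) ^ 2 - u) * (u - (x - y) ^ 2))

theorem triA_eq_heronArea (x y z : ℝ) : triA x y z = heronArea x y (z ^ 2) := rfl

theorem heronArea_affine {x y t : ℝ} (hxy : 0 ≤ x * y) (ht : t ∈ Ioo (0 : ℝ) 1) :
    heronArea x y (4 * (x * y) * t + (x - y) ^ 2) = x * y * (√t * √(1 - t)) := by
  rw [heronArea, show ((x + y) ^ 2 - (4 * (x * y) * t + (x - y) ^ 2)) *
      ((4 * (x * y) * t + (x - y) ^ 2) - (x - y) ^ 2) = (4 * (x * y)) ^ 2 * (t * (1 - t)) by ring,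
    sqrt_mul (by positivity), sqrt_sq (by positivity), sqrt_mul ht.1.le]
  ring

theorem integral_Ioo_heronArea_rpow {μ x y : ℝ} (hμ : -(1 / 2) < μ) (hx : 0 < x) (hy : 0 < y) :
    ∫ u in Ioo ((x - y) ^ 2) ((x + y) ^ 2), heronArea x y u ^ (2 * μ - 1) =
      4 * (x * y) ^ (2 * μ) * (Gamma (μ + 1 / 2) ^ 2 / Gamma (2 * μ + 1)) := by
  have hxy : 0 < x * y := mul_pos hx hy
  have hpow : (x * y) ^ (2 * μ) = (x * y) ^ (2 * μ - 1) * (x * y) := by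
    rw [← rpow_add_one hxy.ne']
    ring_nf
  calc ∫ u in Ioo ((x - y) ^ 2) ((x + y) ^ 2), heronArea x y u ^ (2 * μ - 1)
      = 4 * (x * y) * ∫ t in Ioo (0 : ℝ) 1,
          heronArea x y (4 * (x * y) * t + (x - y) ^ 2) ^ (2 * μ - 1) := by
        rw [integral_Ioo_eq_smul_integral_Ioo_zero_one _ (by nlinarith),
          show (x + y) ^ 2 - (x - y) ^ 2 = 4 * (x * y) by ring, smul_eq_mul]
    _ = 4 * (x * y) * ∫ t in Ioo (0 : ℝ) 1,
          (x * y) ^ (2 * μ - 1) * (t ^ (μ + 1 / 2 - 1) * (1 - t) ^ (μ + 1 / 2 - 1)) := by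
        congr 1
        refine setIntegral_congr_fun measurableSet_Ioo fun t ht => ?_
        rw [heronArea_affine hxy.le ht, mul_rpow hxy.le (by positivity),
          mul_rpow (sqrt_nonneg _) (sqrt_nonneg _), sqrt_eq_rpow, sqrt_eq_rpow,
          ← rpow_mul ht.1.le, ← rpow_mul (sub_pos.2 ht.2).le]
        ring_nf
    _ = 4 * (x * y) ^ (2 * μ) * (Gamma (μ + 1 / 2) ^ 2 / Gamma (2 * μ + 1)) := by
        rw [integral_const_mul, integral_Ioo_rpow_mul_one_sub_rpow (by linarith) (by linarith),
          show μ + 1 / 2 + (μ + 1 / 2) = 2 * μ + 1 by ring, hpow]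
        ring

theorem pos_of_mem_Ioo_abs_sub_add {x y z : ℝ} (hz : z ∈ Ioo |x - y| (x + y)) :
    0 < x ∧ 0 < y ∧ 0 < z := by
  have := abs_sub_lt_iff.1 (hz.1.trans hz.2)
  exact ⟨by linarith, by linarith, (abs_nonneg _).trans_lt hz.1⟩

theorem rpow_add_half_mul_Dker_of_mem {μ x y z : ℝ} (hz : z ∈ Ioo |x - y| (x + y)) :
    z ^ (μ + 1 / 2) * Dker μ x y z =
      2 ^ (μ - 1) / (Gamma (μ + 1 / 2) * √π) * (x * y) ^ (-μ + 1 / 2) *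
        (z * triA x y z ^ (2 * μ - 1)) := by
  obtain ⟨hx, hy, hz0⟩ := pos_of_mem_Ioo_abs_sub_add hz
  have hzz : z ^ (μ + 1 / 2) * z ^ (-μ + 1 / 2) = z := by
    rw [← rpow_add hz0, show μ + 1 / 2 + (-μ + 1 / 2) = 1 by ring, rpow_one]
  rw [Dker, if_pos ⟨hz.1, hz.2⟩, mul_rpow (by positivity) hz0.le]
  linear_combination 2 ^ (μ - 1) / (Gamma (μ + 1 / 2) * √π) * (x * y) ^ (-μ + 1 / 2) *
    triA x y z ^ (2 * μ - 1) * hzz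

theorem integral_rpow_add_half_mul_Dker {μ x y : ℝ} (hμ : -(1 / 2) < μ) (hx : 0 < x)
    (hy : 0 < y) :
    ∫ z in Ioi 0, z ^ (μ + 1 / 2) * Dker μ x y z =
      (x * y) ^ (μ + 1 / 2) / (2 ^ μ * Gamma (μ + 1)) := by
  set C := 2 ^ (μ - 1) / (Gamma (μ + 1 / 2) * √π) * (x * y) ^ (-μ + 1 / 2)
  have hsupp : Ioo |x - y| (x + y) ⊆ Ioi 0 := fun z hz => (pos_of_mem_Ioo_abs_sub_add hz).2.2
  have hsq := integral_Ioo_two_mul_smul_comp_sq (fun u => heronArea x y u ^ (2 * μ - 1))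
    (abs_nonneg (x - y)) (abs_sub_lt_iff.2 ⟨by linarith, by linarith⟩ : |x - y| < x + y).le
  rw [sq_abs, integral_Ioo_heronArea_rpow hμ hx hy] at hsq
  calc ∫ z in Ioi 0, z ^ (μ + 1 / 2) * Dker μ x y z
      = ∫ z in Ioo |x - y| (x + y), z ^ (μ + 1 / 2) * Dker μ x y z :=
        setIntegral_eq_of_subset_of_forall_sdiff_eq_zero measurableSet_Ioi hsupp
          fun z hz => by rw [Dker, if_neg fun h => hz.2 ⟨h.1, h.2⟩, mul_zero]
    _ = ∫ z in Ioo |x - y| (x + y),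
          (C / 2) * ((2 * z) • heronArea x y (z ^ 2) ^ (2 * μ - 1)) := by
        refine setIntegral_congr_fun measurableSet_Ioo fun z hz => ?_
        rw [rpow_add_half_mul_Dker_of_mem hz, smul_eq_mul, triA_eq_heronArea]
        ring
    _ = (C / 2) * (4 * (x * y) ^ (2 * μ) * (Gamma (μ + 1 / 2) ^ 2 / Gamma (2 * μ + 1))) := by
        rw [integral_const_mul, ← hsq]
    _ = (x * y) ^ (μ + 1 / 2) / (2 ^ μ * Gamma (μ + 1)) := by
        have hpow : (x * y) ^ (-μ + 1 / 2) * (x * y) ^ (2 * μ) = (x * y) ^ (μ + 1 / 2) := by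
          rw [← rpow_add (mul_pos hx hy)]
          ring_nf
        have hdup := Gamma_add_half_mul_Gamma_add_one μ
        have hG : 0 < Gamma (μ + 1 / 2) := Gamma_pos_of_pos (by linarith)
        have hG' : 0 < Gamma (μ + 1) := Gamma_pos_of_pos (by linarith)
        have hG'' : 0 < Gamma (2 * μ + 1) := Gamma_pos_of_pos (by linarith)
        simp only [C]
        rw [rpow_sub_one two_ne_zero, ← hpow]
        -- keeps `field_simp` from rewriting the argument `μ + 1 / 2` to `(2 * μ + 1) / 2`
        generalize Gamma (μ + 1 / 2) = G at hG hdup ⊢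
        field_simp
        linear_combination 4 * hdup

theorem Dker_nonneg {μ : ℝ} (hμ : -(1 / 2) < μ) (x y z : ℝ) : 0 ≤ Dker μ x y z := by
  rw [Dker]
  split_ifs with h
  · obtain ⟨hx, hy, hz⟩ := pos_of_mem_Ioo_abs_sub_add h
    have hG : 0 < Gamma (μ + 1 / 2) := Gamma_pos_of_pos (by linarith)
    unfold triA
    positivity
  · exact le_rfl

theorem measurable_Dker (μ x : ℝ) : Measurable (Function.uncurry (Dker μ x)) := by
  change Measurable fun p : ℝ × ℝ => Dker μ x p.1 p.2
  unfold Dker triA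
  refine Measurable.ite ?_ (by fun_prop) measurable_const
  exact (measurableSet_lt (f := fun p : ℝ × ℝ => |x - p.1|) (by fun_prop) (by fun_prop)).inter
    (measurableSet_lt (f := fun p : ℝ × ℝ => p.2) (by fun_prop) (by fun_prop))

theorem integrableOn_rpow_add_half_mul_Dker {μ x y : ℝ} (hμ : -(1 / 2) < μ) (hx : 0 < x)
    (hy : 0 < y) : IntegrableOn (fun z => z ^ (μ + 1 / 2) * Dker μ x y z) (Ioi 0) := by
  -- a non-integrable function has Bochner integral `0`
  refine Integrable.of_integral_ne_zero ?_
  rw [integral_rpow_add_half_mul_Dker hμ hx hy]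
  exact (div_pos (by positivity) (mul_pos (by positivity) (Gamma_pos_of_pos (by linarith)))).ne'

theorem stmt6_general (μ : ℝ) (hμ : -(1/2 : ℝ) < μ)
    (r s : ℝ → ℝ) (cmu : ℝ)
    (hc : cmu = 2 ^ μ * Real.Gamma (μ + 1))
    (hr : ∀ x : ℝ, 0 < x → r x = x ^ (-μ - 1/2))
    (hs : ∀ x : ℝ, 0 < x → s x = x ^ (2 * μ + 1) / cmu)
    (f g : ℝ → ℂ)
    (hfm : AEStronglyMeasurable f (volume.restrict (Ioi (0:ℝ))))
    (hgm : AEStronglyMeasurable g (volume.restrict (Ioi (0:ℝ))))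
    (hf : IntegrableOn (fun x => ‖f x‖ * (s x * r x)) (Ioi (0:ℝ)))
    (M : ℝ)
    (hg : ∀ᵐ x ∂(volume.restrict (Ioi (0:ℝ))), r x * ‖g x‖ ≤ M) :
    (∀ x : ℝ, 0 < x →
      Integrable (fun yz : ℝ × ℝ => ((Dker μ x yz.1 yz.2 : ℝ) : ℂ) * f yz.1 * g yz.2)
        ((volume.restrict (Ioi (0:ℝ))).prod (volume.restrict (Ioi (0:ℝ))))) ∧
    (∀ x : ℝ, 0 < x →
      r x * ‖∫ yz in (Ioi (0:ℝ)) ×ˢ (Ioi (0:ℝ)),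
          ((Dker μ x yz.1 yz.2 : ℝ) : ℂ) * f yz.1 * g yz.2‖ ≤
        (∫ y in Ioi (0:ℝ), ‖f y‖ * (s y * r y)) * M) := by
  set ν := volume.restrict (Ioi (0:ℝ))
  have hgw : ∀ᵐ z ∂ν, ‖g z‖ ≤ M * z ^ (μ + 1 / 2) := by
    filter_upwards [hg, ae_restrict_mem measurableSet_Ioi] with z hgz (hz : 0 < z)
    rw [hr z hz, show -μ - 1 / 2 = -(μ + 1 / 2) by ring] at hgz
    exact le_mul_rpow_of_rpow_neg_mul_le hz hgz
  have hmoment (x : ℝ) (hx : 0 < x) :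
      ∀ᵐ y ∂ν, ∫ z, z ^ (μ + 1 / 2) * Dker μ x y z ∂ν = x ^ (μ + 1 / 2) * (s y * r y) :=
    ae_restrict_of_forall_mem measurableSet_Ioi fun y (hy : 0 < y) => by
      rw [integral_rpow_add_half_mul_Dker hμ hx hy, hs y hy, hr y hy, hc, mul_rpow hx.le hy.le,
        div_mul_eq_mul_div, ← rpow_add hy, show 2 * μ + 1 + (-μ - 1 / 2) = μ + 1 / 2 by ring,
        mul_div_assoc]
  have hKw (x : ℝ) (hx : 0 < x) :
      ∀ᵐ y ∂ν, Integrable (fun z => z ^ (μ + 1 / 2) * Dker μ x y z) ν :=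
    ae_restrict_of_forall_mem measurableSet_Ioi fun _ hy =>
      integrableOn_rpow_add_half_mul_Dker hμ hx hy
  have hfm' (x : ℝ) : Integrable (fun y => ‖f y‖ * (x ^ (μ + 1 / 2) * (s y * r y))) ν :=
    (hf.const_mul (x ^ (μ + 1 / 2))).congr (.of_forall fun y => by ring)
  refine ⟨fun x hx => integrable_kernel_mul_mul (measurable_Dker μ x).aestronglyMeasurable
    (Dker_nonneg hμ x) (hKw x hx) (hmoment x hx) hfm hgm (hfm' x) hgw, fun x hx => ?_⟩
  have hbound := norm_integral_kernel_mul_mul_le (measurable_Dker μ x).aestronglyMeasurable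
    (Dker_nonneg hμ x) (hKw x hx) (hmoment x hx) hfm hgm (hfm' x) hgw
  simp_rw [mul_left_comm _ (x ^ (μ + 1 / 2))] at hbound
  rw [integral_const_mul] at hbound
  have hrx : r x * x ^ (μ + 1 / 2) = 1 := by
    rw [hr x hx, ← rpow_add hx, show -μ - 1 / 2 + (μ + 1 / 2) = 0 by ring, rpow_zero]
  rw [Measure.volume_eq_prod, ← Measure.prod_restrict]
  calc _ ≤ r x * (M * (x ^ (μ + 1 / 2) * ∫ y, ‖f y‖ * (s y * r y) ∂ν)) :=
        mul_le_mul_of_nonneg_left hbound (by rw [hr x hx]; positivity)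
    _ = (∫ y, ‖f y‖ * (s y * r y) ∂ν) * M := by
        linear_combination (M * ∫ y, ‖f y‖ * (s y * r y) ∂ν) * hrx

/-- Young's inequality for the Hankel convolution: `L¹(sr) ♯ L^∞(r) ⊆ L^∞(r)`. -/
theorem stmt6 (μ : ℝ) (hμ : -(1/2 : ℝ) < μ)
    (r s : ℝ → ℝ) (cmu : ℝ)
    (hc : cmu = 2 ^ μ * Real.Gamma (μ + 1))
    (hr : ∀ x : ℝ, 0 < x → r x = x ^ (-μ - 1/2))
    (hs : ∀ x : ℝ, 0 < x → s x = x ^ (2 * μ + 1) / cmu)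
    (f g : ℝ → ℂ)
    (hfm : AEStronglyMeasurable f (volume.restrict (Ioi (0:ℝ))))
    (hgm : AEStronglyMeasurable g (volume.restrict (Ioi (0:ℝ))))
    (hf : IntegrableOn (fun x => ‖f x‖ * (s x * r x)) (Ioi (0:ℝ)))
    (M : ℝ) (hM : 0 ≤ M)
    (hg : ∀ᵐ x ∂(volume.restrict (Ioi (0:ℝ))), r x * ‖g x‖ ≤ M) :
    (∀ x : ℝ, 0 < x →
      Integrable (fun yz : ℝ × ℝ => ((Dker μ x yz.1 yz.2 : ℝ) : ℂ) * f yz.1 * g yz.2)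
        ((volume.restrict (Ioi (0:ℝ))).prod (volume.restrict (Ioi (0:ℝ))))) ∧
    (∀ x : ℝ, 0 < x →
      r x * ‖∫ yz in (Ioi (0:ℝ)) ×ˢ (Ioi (0:ℝ)),
          ((Dker μ x yz.1 yz.2 : ℝ) : ℂ) * f yz.1 * g yz.2‖ ≤
        (∫ y in Ioi (0:ℝ), ‖f y‖ * (s y * r y)) * M) :=
  stmt6_general μ hμ r s cmu hc hr hs f g hfm hgm hf M hg
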